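/- arXiv:1112.4549 — 3 statements merged into one kernel-verified Lean document; each statement's English description precedes it below -/
import Mathlib

section
/- Let Λ be a finitely aligned k-graph such that Λ⁰ is finite and Λ contains no cycles, i.e. no λ ∈ Λ ∖ Λ⁰ with r(λ) = s(λ). Then for every Cuntz–Krieger Λ-family {t_λ : λ ∈ Λ} in a C*-algebra B, the C*-subalgebra of B generated by {t_λ : λ ∈ Λ} is AF. -/
open scoped ComplexOrder ENat

/-- A higher-rank graph (`k`-graph): a countable small category `Λ` together with a degree
functor `d : Λ → ℕᵏ` satisfying the unique factorisation property.  Morphisms ("paths") form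
the type `Path`; vertices are identified with the paths of degree `0`.  Composition is encoded
as a total function `comp` whose axioms only apply to composable pairs (`s μ = r ν`). -/
structure KGraph (k : ℕ) : Type 1 where
  Path : Type
  countable : Countable Path
  d : Path → Fin k → ℕ
  r : Path → Path
  s : Path → Path
  comp : Path → Path → Path
  d_r : ∀ lam, d (r lam) = 0
  d_s : ∀ lam, d (s lam) = 0
  r_vertex : ∀ v, d v = 0 → r v = v
  s_vertex : ∀ v, d v = 0 → s v = v
  r_comp : ∀ mu nu, s mu = r nu → r (comp mu nu) = r mu
  s_comp : ∀ mu nu, s mu = r nu → s (comp mu nu) = s nu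
  d_comp : ∀ mu nu, s mu = r nu → d (comp mu nu) = d mu + d nu
  comp_assoc : ∀ lam mu nu, s lam = r mu → s mu = r nu →
    comp (comp lam mu) nu = comp lam (comp mu nu)
  id_comp : ∀ lam, comp (r lam) lam = lam
  comp_id : ∀ lam, comp lam (s lam) = lam
  factor : ∀ (lam : Path) (m n : Fin k → ℕ), d lam = m + n →
    ∃! p : Path × Path, d p.1 = m ∧ d p.2 = n ∧ s p.1 = r p.2 ∧ comp p.1 p.2 = lam

namespace KGraph

variable {k : ℕ} (Λ : KGraph k)

/-- `v` is a vertex, i.e. a path of degree `0`. -/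
def IsVertex (v : Λ.Path) : Prop := Λ.d v = 0

/-- The set of minimal common extensions of `mu` and `nu`. -/
def MCE (mu nu : Λ.Path) : Set Λ.Path :=
  {lam | Λ.d lam = Λ.d mu ⊔ Λ.d nu ∧
    (∃ α, Λ.s mu = Λ.r α ∧ Λ.comp mu α = lam) ∧
    (∃ β, Λ.s nu = Λ.r β ∧ Λ.comp nu β = lam)}

/-- Pairs `(α, β)` with `μα = νβ ∈ MCE (μ, ν)`. -/
def MCEPairs (mu nu : Λ.Path) : Set (Λ.Path × Λ.Path) :=
  {p | Λ.s mu = Λ.r p.1 ∧ Λ.s nu = Λ.r p.2 ∧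
    Λ.comp mu p.1 = Λ.comp nu p.2 ∧ Λ.comp mu p.1 ∈ Λ.MCE mu nu}

/-- `Λ` is finitely aligned if all sets of minimal common extensions are finite. -/
def FinitelyAligned : Prop := ∀ mu nu : Λ.Path, (Λ.MCE mu nu).Finite

/-- `Λ` is row-finite if `vΛⁿ` is finite for every vertex `v` and `n ∈ ℕᵏ`. -/
def RowFinite : Prop :=
  ∀ (v : Λ.Path) (n : Fin k → ℕ), Λ.IsVertex v → {lam | Λ.r lam = v ∧ Λ.d lam = n}.Finite

/-- `Λ` is locally convex. -/
def LocallyConvex : Prop :=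
  ∀ i j : Fin k, i ≠ j → ∀ mu : Λ.Path, Λ.d mu = Pi.single i 1 →
    (∃ e, Λ.r e = Λ.r mu ∧ Λ.d e = Pi.single j 1) →
    ∃ e, Λ.r e = Λ.s mu ∧ Λ.d e = Pi.single j 1

/-- A subset `F ⊆ vΛ` is exhaustive if every `λ ∈ vΛ` has a common extension with some
member of `F`. -/
def Exhaustive (v : Λ.Path) (F : Set Λ.Path) : Prop :=
  ∀ lam, Λ.r lam = v → ∃ mu ∈ F, (Λ.MCE lam mu).Nonempty

/-- A generalised cycle: a pair of distinct paths `μ ≠ ν` with the same range and source such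
that every extension of `μ` has a common extension with `ν`. -/
def IsGenCycle (mu nu : Λ.Path) : Prop :=
  mu ≠ nu ∧ Λ.s mu = Λ.s nu ∧ Λ.r mu = Λ.r nu ∧
    ∀ τ, Λ.r τ = Λ.s mu → (Λ.MCE (Λ.comp mu τ) nu).Nonempty

/-- An entrance to the generalised cycle `(μ, ν)`. -/
def IsEntrance (mu nu τ : Λ.Path) : Prop :=
  Λ.r τ = Λ.s nu ∧ Λ.MCE (Λ.comp nu τ) mu = ∅

/-- A (conventional) cycle: a path of nonzero degree whose range and source coincide. -/
def IsCycle (lam : Λ.Path) : Prop := Λ.d lam ≠ 0 ∧ Λ.r lam = Λ.s lam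

/-- `Λ` contains no (conventional) cycles. -/
def NoCycles : Prop := ∀ lam : Λ.Path, Λ.r lam = Λ.s lam → Λ.d lam = 0

/-- A vertex `v` with `vΛ = {v}`. -/
def IsSource (v : Λ.Path) : Prop :=
  Λ.IsVertex v ∧ ∀ lam, Λ.r lam = v → lam = v

/-- `Ext (μ; E)`. -/
def Ext (mu : Λ.Path) (E : Set Λ.Path) : Set Λ.Path :=
  {τ | Λ.r τ = Λ.s mu ∧ ∃ nu ∈ E, Λ.comp mu τ ∈ Λ.MCE mu nu}

/-- No cycle in `Λ` has an entrance. -/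
def NoCycleHasEntrance : Prop :=
  ∀ lam, Λ.IsCycle lam → ∀ τ, Λ.r τ = Λ.r lam → (Λ.MCE τ lam).Nonempty

/-- `x` encodes a path of degree `m ∈ (ℕ ∪ {∞})ᵏ` in `Λ`, i.e. a degree-preserving functor
`Ω_{k,m} → Λ`, recorded as a total function on pairs `(p, q)`; only the values with
`p ≤ q ≤ m` are constrained. -/
def IsPathFun (m : Fin k → ℕ∞) (x : (Fin k → ℕ) → (Fin k → ℕ) → Λ.Path) : Prop :=
  (∀ p q : Fin k → ℕ, p ≤ q → (∀ i, (q i : ℕ∞) ≤ m i) → Λ.d (x p q) = q - p) ∧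
  (∀ p q : Fin k → ℕ, p ≤ q → (∀ i, (q i : ℕ∞) ≤ m i) →
    Λ.r (x p q) = x p p ∧ Λ.s (x p q) = x q q) ∧
  (∀ p q u : Fin k → ℕ, p ≤ q → q ≤ u → (∀ i, (u i : ℕ∞) ≤ m i) →
    Λ.comp (x p q) (x q u) = x p u)

/-- `x` is a boundary path of degree `m`. -/
def IsBoundaryFun (m : Fin k → ℕ∞) (x : (Fin k → ℕ) → (Fin k → ℕ) → Λ.Path) : Prop :=
  Λ.IsPathFun m x ∧
  ∀ p : Fin k → ℕ, (∀ i, (p i : ℕ∞) ≤ m i) →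
    ∀ E : Set Λ.Path, E.Finite → (∀ lam ∈ E, Λ.r lam = x p p) → Λ.Exhaustive (x p p) E →
      ∃ mu ∈ E, (∀ i, ((p i + Λ.d mu i : ℕ) : ℕ∞) ≤ m i) ∧ x p (p + Λ.d mu) = mu

/-- A path function `x` of degree `m` belongs to `Λ^{≤∞}`. -/
def IsLeInftyPath (m : Fin k → ℕ∞) (x : (Fin k → ℕ) → (Fin k → ℕ) → Λ.Path) : Prop :=
  Λ.IsPathFun m x ∧
  ∀ n : Fin k → ℕ, (∀ i, (n i : ℕ∞) ≤ m i) → ∀ i, (n i : ℕ∞) = m i →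
    ∀ e, ¬(Λ.r e = x n n ∧ Λ.d e = Pi.single i 1)

/-- The degree of `τ^∞` for a cycle (or initial cycle) `τ`: `∞` in the coordinates where
`d τ` is nonzero, `0` elsewhere. -/
def degInf (τ : Λ.Path) : Fin k → ℕ∞ := fun i => if Λ.d τ i = 0 then 0 else ⊤

/-- An initial cycle: `r μ = s μ` and `r(μ)Λ^{eᵢ} = ∅` whenever `d(μ)ᵢ = 0`. -/
def IsInitialCycle (mu : Λ.Path) : Prop :=
  Λ.r mu = Λ.s mu ∧
  ∀ i, Λ.d mu i = 0 → ∀ e, ¬(Λ.r e = Λ.r mu ∧ Λ.d e = Pi.single i 1)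

/-- `x` is (the path function of) `μ^∞` for the initial cycle `μ`. -/
def IsInfIterate (mu : Λ.Path) (x : (Fin k → ℕ) → (Fin k → ℕ) → Λ.Path) : Prop :=
  Λ.IsPathFun (Λ.degInf mu) x ∧ x 0 0 = Λ.r mu ∧
    ∀ n : ℕ, x (n • Λ.d mu) ((n + 1) • Λ.d mu) = mu

/-- Membership in `Λ^{≤ n}`. -/
def LePath (n : Fin k → ℕ) (lam : Λ.Path) : Prop :=
  Λ.d lam ≤ n ∧
    ∀ i, Λ.d lam i < n i → ∀ e, ¬(Λ.r e = Λ.s lam ∧ Λ.d e = Pi.single i 1)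

/-- Minimal common extensions computed inside a subset `S` of `Λ` (all data lying in `S`). -/
def MCEWithin (S : Set Λ.Path) (mu nu : Λ.Path) : Set Λ.Path :=
  {lam | lam ∈ S ∧ Λ.d lam = Λ.d mu ⊔ Λ.d nu ∧
    (∃ α ∈ S, Λ.s mu = Λ.r α ∧ Λ.comp mu α = lam) ∧
    (∃ β ∈ S, Λ.s nu = Λ.r β ∧ Λ.comp nu β = lam)}

/-- Generalised cycles of the sub-`k`-graph determined by a subset `S` of `Λ`. -/
def IsGenCycleWithin (S : Set Λ.Path) (mu nu : Λ.Path) : Prop :=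
  mu ≠ nu ∧ Λ.s mu = Λ.s nu ∧ Λ.r mu = Λ.r nu ∧
    ∀ τ ∈ S, Λ.r τ = Λ.s mu → (Λ.MCEWithin S (Λ.comp mu τ) nu).Nonempty

end KGraph

/-- A Cuntz–Krieger `Λ`-family in a `*`-ring `B`: (CK1) the vertex elements are mutually
orthogonal projections, (CK2) multiplicativity, (CK3) the Cuntz–Krieger relation for
`t_μ* t_ν`, and (CK4) the exhaustivity relation (stated for an arbitrary ordering of the
finite exhaustive set). -/
structure CKFamily {k : ℕ} (Λ : KGraph k) (B : Type*) [NonUnitalRing B] [StarRing B] where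
  t : Λ.Path → B
  selfadjoint : ∀ v, Λ.IsVertex v → star (t v) = t v
  idem : ∀ v, Λ.IsVertex v → t v * t v = t v
  orth : ∀ v w, Λ.IsVertex v → Λ.IsVertex w → v ≠ w → t v * t w = 0
  mul_eq : ∀ mu nu, Λ.s mu = Λ.r nu → t mu * t nu = t (Λ.comp mu nu)
  ck3 : ∀ mu nu, star (t mu) * t nu = ∑ᶠ p ∈ Λ.MCEPairs mu nu, t p.1 * star (t p.2)
  ck4 : ∀ v, Λ.IsVertex v → ∀ (a : Λ.Path) (l : List Λ.Path), (a :: l).Nodup →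
    (∀ lam ∈ a :: l, Λ.r lam = v) → Λ.Exhaustive v {lam | lam ∈ a :: l} →
    (l.map fun lam => t v - t lam * star (t lam)).foldl (· * ·)
      (t v - t a * star (t a)) = 0

/-- A C*-algebra is AF (approximately finite-dimensional) if it contains an increasing
sequence of finite-dimensional `*`-subalgebras whose union is dense. -/
def IsAF (A : Type*) [NonUnitalNormedRing A] [StarRing A] [NormedSpace ℂ A] : Prop :=
  ∃ S : ℕ → NonUnitalStarSubalgebra ℂ A, Monotone S ∧
    (∀ n, FiniteDimensional ℂ (S n)) ∧ Dense (⋃ n, (S n : Set A))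

/-- A closed `*`-subalgebra of `A`, presented as a subset `S`, is AF if it contains an
increasing sequence of finite-dimensional `*`-subalgebras of `A` whose union is dense in `S`. -/
def IsAFIn (A : Type*) [NonUnitalNormedRing A] [StarRing A] [NormedSpace ℂ A]
    (S : Set A) : Prop :=
  ∃ T : ℕ → NonUnitalStarSubalgebra ℂ A, Monotone T ∧ (∀ n, (T n : Set A) ⊆ S) ∧
    (∀ n, FiniteDimensional ℂ (T n)) ∧ ∀ x ∈ S, x ∈ closure (⋃ n, (T n : Set A))

/-!
Without cycles, a path `x` of nonzero degree reaches strictly fewer vertices from `s x` than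
from `r x`; with `N` vertices this bounds every chain of nontrivial paths by `N`.

Call `α` a tail of `(μ, ν)` when `μα ∈ MCE(μ, ν)`: these are the paths occurring in (CK3) for
`t_μ* t_ν`. For finite `E ⊆ Λ`, the closure `Y` of `E ∪ s(E)` under tails is finite (finite
alignment, plus the reach bound on the number of rounds), and so is the set of composites of
elements of `Y`. Tails of composites are composites, so by (CK3) the span of the `t_μ t_ν*` with
`μ, ν` such composites and `s μ = s ν` is a finite-dimensional `*`-subalgebra. Exhausting `Λ` by
finite sets `E` gives an increasing sequence of these whose union is dense.
-/

namespace KGraph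

variable {k : ℕ} (Λ : KGraph k)

lemma exists_factor (lam : Λ.Path) {m : Fin k → ℕ} (hm : m ≤ Λ.d lam) :
    ∃ p q, Λ.d p = m ∧ Λ.s p = Λ.r q ∧ Λ.comp p q = lam := by
  obtain ⟨⟨p, q⟩, ⟨hp, -, hpq, hlam⟩, -⟩ :=
    Λ.factor lam m (Λ.d lam - m) (add_tsub_cancel_of_le hm).symm
  exact ⟨p, q, hp, hpq, hlam⟩

lemma comp_inj {p q p' q' : Λ.Path} (hpq : Λ.s p = Λ.r q) (hpq' : Λ.s p' = Λ.r q')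
    (hd : Λ.d p = Λ.d p') (h : Λ.comp p q = Λ.comp p' q') : p = p' ∧ q = q' := by
  have hdq : Λ.d q = Λ.d q' :=
    add_left_cancel (by rw [← Λ.d_comp p q hpq, h, Λ.d_comp p' q' hpq', hd])
  obtain ⟨_, -, huniq⟩ := Λ.factor (Λ.comp p q) (Λ.d p) (Λ.d q) (Λ.d_comp p q hpq)
  have e₁ := huniq (p, q) ⟨rfl, rfl, hpq, rfl⟩
  have e₂ := huniq (p', q') ⟨hd.symm, hdq.symm, hpq', h.symm⟩
  exact Prod.mk.inj (e₁.trans e₂.symm)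

lemma comp_left_cancel {x a a' : Λ.Path} (ha : Λ.s x = Λ.r a) (ha' : Λ.s x = Λ.r a')
    (h : Λ.comp x a = Λ.comp x a') : a = a' :=
  (Λ.comp_inj ha ha' rfl h).2

lemma mce_comm (x y : Λ.Path) : Λ.MCE x y = Λ.MCE y x := by
  ext lam
  simp only [MCE, Set.mem_ofPred_eq, sup_comm (Λ.d x) (Λ.d y)]
  tauto

lemma r_eq_r_of_mem_MCE {x y lam : Λ.Path} (h : lam ∈ Λ.MCE x y) : Λ.r x = Λ.r y := by
  obtain ⟨-, ⟨a, ha, rfl⟩, ⟨b, hb, hab⟩⟩ := h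
  rw [← Λ.r_comp x a ha, ← hab, Λ.r_comp y b hb]

def len (lam : Λ.Path) : ℕ := ∑ i, Λ.d lam i

lemma len_comp {mu nu : Λ.Path} (h : Λ.s mu = Λ.r nu) :
    Λ.len (Λ.comp mu nu) = Λ.len mu + Λ.len nu := by
  simp [len, Λ.d_comp mu nu h, Finset.sum_add_distrib]

lemma len_pos {lam : Λ.Path} (h : Λ.d lam ≠ 0) : 0 < Λ.len lam :=
  Nat.pos_of_ne_zero fun h0 => h <| funext fun i =>
    Finset.sum_eq_zero_iff.mp h0 i (Finset.mem_univ i)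

lemma len_le_len {mu nu : Λ.Path} (h : Λ.d mu ≤ Λ.d nu) : Λ.len mu ≤ Λ.len nu :=
  Finset.sum_le_sum fun i _ => h i

def reach (v : Λ.Path) : Set Λ.Path := Λ.s '' {lam | Λ.r lam = v}

lemma reach_subset_vertices (v : Λ.Path) : Λ.reach v ⊆ {w | Λ.IsVertex w} := by
  rintro _ ⟨lam, -, rfl⟩
  exact Λ.d_s lam

lemma mem_reach_self {v : Λ.Path} (hv : Λ.IsVertex v) : v ∈ Λ.reach v :=
  ⟨v, Λ.r_vertex v hv, Λ.s_vertex v hv⟩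

lemma reach_s_ssubset_reach_r (hnc : Λ.NoCycles) {x : Λ.Path} (hx : Λ.d x ≠ 0) :
    Λ.reach (Λ.s x) ⊂ Λ.reach (Λ.r x) := by
  have hsub : Λ.reach (Λ.s x) ⊆ Λ.reach (Λ.r x) := by
    rintro _ ⟨mu, hmu, rfl⟩
    exact ⟨Λ.comp x mu, Λ.r_comp x mu hmu.symm, Λ.s_comp x mu hmu.symm⟩
  refine (Set.ssubset_iff_of_subset hsub).mpr ⟨Λ.r x, Λ.mem_reach_self (Λ.d_r x), ?_⟩
  rintro ⟨mu, hmu, hs⟩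
  -- a path from `s x` back to `r x` would close `x` up to a cycle
  have hcyc := hnc (Λ.comp x mu) (by rw [Λ.r_comp x mu hmu.symm, Λ.s_comp x mu hmu.symm, hs])
  rw [Λ.d_comp x mu hmu.symm] at hcyc
  exact hx (add_eq_zero.mp hcyc).1

lemma ncard_reach_pos (hfin : {v : Λ.Path | Λ.IsVertex v}.Finite) {v : Λ.Path}
    (hv : Λ.IsVertex v) : 0 < (Λ.reach v).ncard :=
  (Set.ncard_pos (hfin.subset (Λ.reach_subset_vertices v))).mpr ⟨v, Λ.mem_reach_self hv⟩

lemma ncard_reach_le (hfin : {v : Λ.Path | Λ.IsVertex v}.Finite) (v : Λ.Path) :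
    (Λ.reach v).ncard ≤ {v : Λ.Path | Λ.IsVertex v}.ncard :=
  Set.ncard_le_ncard (Λ.reach_subset_vertices v) hfin

lemma ncard_reach_s_lt (hfin : {v : Λ.Path | Λ.IsVertex v}.Finite) (hnc : Λ.NoCycles)
    {x : Λ.Path} (hx : Λ.d x ≠ 0) :
    (Λ.reach (Λ.s x)).ncard < (Λ.reach (Λ.r x)).ncard :=
  Set.ncard_lt_ncard (Λ.reach_s_ssubset_reach_r hnc hx) (hfin.subset (Λ.reach_subset_vertices _))

def IsTail (x y a : Λ.Path) : Prop := Λ.s x = Λ.r a ∧ Λ.comp x a ∈ Λ.MCE x y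

def tails (S : Set Λ.Path) : Set Λ.Path := {a | ∃ x ∈ S, ∃ y ∈ S, Λ.IsTail x y a}

lemma isTail_of_mem_MCEPairs {x y : Λ.Path} {p : Λ.Path × Λ.Path} (hp : p ∈ Λ.MCEPairs x y) :
    Λ.IsTail x y p.1 ∧ Λ.IsTail y x p.2 :=
  ⟨⟨hp.1, hp.2.2.2⟩, ⟨hp.2.1, by rw [← hp.2.2.1, Λ.mce_comm]; exact hp.2.2.2⟩⟩

lemma MCEPairs_finite (hFA : Λ.FinitelyAligned) (x y : Λ.Path) : (Λ.MCEPairs x y).Finite := by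
  refine Set.Finite.of_finite_image ((hFA x y).subset ?_) ?_ (f := fun p => Λ.comp x p.1)
  · rintro _ ⟨p, hp, rfl⟩
    exact hp.2.2.2
  · rintro p hp q hq (h : Λ.comp x p.1 = Λ.comp x q.1)
    refine Prod.ext (Λ.comp_left_cancel hp.1 hq.1 h) (Λ.comp_left_cancel hp.2.1 hq.2.1 ?_)
    rw [← hp.2.2.1, ← hq.2.2.1, h]

lemma tails_finite (hFA : Λ.FinitelyAligned) {S : Set Λ.Path} (hS : S.Finite) :
    (Λ.tails S).Finite := by
  refine ((hS.prod hS).biUnion fun xy _ =>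
    (Λ.MCEPairs_finite hFA xy.1 xy.2).image Prod.fst).subset ?_
  rintro a ⟨x, hx, y, hy, ha, hxa⟩
  obtain ⟨-, -, ⟨b, hb, hab⟩⟩ := id hxa
  exact Set.mem_biUnion (x := (x, y)) ⟨hx, hy⟩ ⟨(a, b), ⟨ha, hb, hab.symm, hab ▸ hxa⟩, rfl⟩

lemma tails_mono {S S' : Set Λ.Path} (h : S ⊆ S') : Λ.tails S ⊆ Λ.tails S' := by
  rintro a ⟨x, hx, y, hy, ha⟩
  exact ⟨x, h hx, y, h hy, ha⟩

variable {Λ} in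
lemma IsTail.eq_of_isVertex {x y a : Λ.Path} (hx : Λ.IsVertex x) (h : Λ.IsTail x y a) :
    a = y := by
  obtain ⟨hxa, hd, -, ⟨b, hyb, hab⟩⟩ := h
  have hxa' : Λ.comp x a = a := by rw [← Λ.s_vertex x hx, hxa, Λ.id_comp]
  rw [hxa'] at hd hab
  have hdb : Λ.d b = 0 := by
    have := Λ.d_comp y b hyb
    rw [hab, hd, hx, ← bot_eq_zero, bot_sup_eq] at this
    exact (add_eq_left.mp this.symm)
  rw [← hab, ← Λ.r_vertex b hdb, ← hyb, Λ.comp_id]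

def tailStage (E : Set Λ.Path) : ℕ → Set Λ.Path
  | 0 => E ∪ Λ.s '' E
  | j + 1 => tailStage E j ∪ Λ.tails (tailStage E j)

def tailClosure (E : Set Λ.Path) : Set Λ.Path := ⋃ j, Λ.tailStage E j

lemma tailStage_mono (E : Set Λ.Path) : Monotone (Λ.tailStage E) :=
  monotone_nat_of_le_succ fun _ => Set.subset_union_left

lemma tailStage_mono_left {E E' : Set Λ.Path} (h : E ⊆ E') (j : ℕ) :
    Λ.tailStage E j ⊆ Λ.tailStage E' j := by
  induction j with
  | zero => exact Set.union_subset_union h (Set.image_mono h)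
  | succ j ih => exact Set.union_subset_union ih (Λ.tails_mono ih)

lemma tailStage_finite (hFA : Λ.FinitelyAligned) {E : Set Λ.Path} (hE : E.Finite) (j : ℕ) :
    (Λ.tailStage E j).Finite := by
  induction j with
  | zero => exact hE.union (hE.image _)
  | succ j ih => exact ih.union (Λ.tails_finite hFA ih)

/-- A tail `z` of `(x, y)` that is new at stage `j + 2` needs `x` or `y` new at stage `j + 1`,
and `x` cannot be a vertex; so `r z = s x` reaches strictly fewer vertices than `r x = r y`. -/
lemma ncard_reach_add_le_of_mem_tailStage_succ (hfin : {v : Λ.Path | Λ.IsVertex v}.Finite)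
    (hnc : Λ.NoCycles) (E : Set Λ.Path) (j : ℕ) {z : Λ.Path}
    (hz : z ∈ Λ.tailStage E (j + 1)) (hz' : z ∉ Λ.tailStage E j) :
    (Λ.reach (Λ.r z)).ncard + j ≤ {v : Λ.Path | Λ.IsVertex v}.ncard := by
  induction j generalizing z with
  | zero => exact Λ.ncard_reach_le hfin _
  | succ j ih =>
    obtain ⟨x, hx, y, hy, hxz⟩ := hz.resolve_left hz'
    have hdx : Λ.d x ≠ 0 := fun h0 => hz' (by rwa [hxz.eq_of_isVertex h0])
    have hlt := Λ.ncard_reach_s_lt hfin hnc hdx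
    rw [← hxz.1]
    by_cases hxj : x ∈ Λ.tailStage E j
    · have hyj : y ∉ Λ.tailStage E j := fun hyj => hz' (Or.inr ⟨x, hxj, y, hyj, hxz⟩)
      have := ih hy hyj
      rw [← Λ.r_eq_r_of_mem_MCE hxz.2] at this
      omega
    · have := ih hx hxj
      omega

lemma tailStage_subset_tailStage_ncard (hfin : {v : Λ.Path | Λ.IsVertex v}.Finite)
    (hnc : Λ.NoCycles) (E : Set Λ.Path) (j : ℕ) :
    Λ.tailStage E j ⊆ Λ.tailStage E {v : Λ.Path | Λ.IsVertex v}.ncard := by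
  set N := {v : Λ.Path | Λ.IsVertex v}.ncard
  have hstab : Λ.tailStage E (N + 1) ⊆ Λ.tailStage E N := fun z hz => by
    by_contra hz'
    have := Λ.ncard_reach_add_le_of_mem_tailStage_succ hfin hnc E N hz hz'
    have := Λ.ncard_reach_pos hfin (Λ.d_r z)
    omega
  induction j with
  | zero => exact Λ.tailStage_mono E (Nat.zero_le N)
  | succ j ih =>
    exact (Set.union_subset_union ih (Λ.tails_mono ih)).trans hstab

lemma tailClosure_finite (hFA : Λ.FinitelyAligned) (hfin : {v : Λ.Path | Λ.IsVertex v}.Finite)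
    (hnc : Λ.NoCycles) {E : Set Λ.Path} (hE : E.Finite) : (Λ.tailClosure E).Finite :=
  (Λ.tailStage_finite hFA hE _).subset
    (Set.iUnion_subset (Λ.tailStage_subset_tailStage_ncard hfin hnc E))

lemma tails_tailClosure_subset (E : Set Λ.Path) : Λ.tails (Λ.tailClosure E) ⊆ Λ.tailClosure E := by
  rintro a ⟨x, hx, y, hy, ha⟩
  obtain ⟨i, hi⟩ := Set.mem_iUnion.mp hx
  obtain ⟨j, hj⟩ := Set.mem_iUnion.mp hy
  refine Set.mem_iUnion.mpr ⟨max i j + 1, Or.inr ⟨x, ?_, y, ?_, ha⟩⟩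
  · exact Λ.tailStage_mono E (le_max_left i j) hi
  · exact Λ.tailStage_mono E (le_max_right i j) hj

lemma tailClosure_mono {E E' : Set Λ.Path} (h : E ⊆ E') : Λ.tailClosure E ⊆ Λ.tailClosure E' :=
  Set.iUnion_mono fun j => Λ.tailStage_mono_left h j

lemma subset_tailClosure (E : Set Λ.Path) : E ∪ Λ.s '' E ⊆ Λ.tailClosure E :=
  Set.subset_iUnion (Λ.tailStage E) 0

inductive IsComposite (S : Set Λ.Path) : Λ.Path → Prop
  | of_mem {x : Λ.Path} : x ∈ S → IsComposite S x
  | cons {x y : Λ.Path} : x ∈ S → IsComposite S y → Λ.s x = Λ.r y → IsComposite S (Λ.comp x y)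

variable {Λ}

lemma IsComposite.mono {S S' : Set Λ.Path} (h : S ⊆ S') {z : Λ.Path}
    (hz : Λ.IsComposite S z) : Λ.IsComposite S' z := by
  induction hz with
  | of_mem hx => exact .of_mem (h hx)
  | cons hx _ hxy ih => exact .cons (h hx) ih hxy

lemma IsComposite.comp {S : Set Λ.Path} {y z : Λ.Path} (hy : Λ.IsComposite S y)
    (hz : Λ.IsComposite S z) (h : Λ.s y = Λ.r z) : Λ.IsComposite S (Λ.comp y z) := by
  induction hy with
  | of_mem hx => exact .cons hx hz h
  | @cons x y hx _ hxy ih =>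
    rw [Λ.s_comp x y hxy] at h
    rw [Λ.comp_assoc x y z hxy h]
    exact .cons hx (ih h) (by rw [Λ.r_comp y z h]; exact hxy)

/-- Vertex factors can be dropped from a composite. -/
lemma IsComposite.mem_or_exists_comp {S : Set Λ.Path} {z : Λ.Path}
    (hz : Λ.IsComposite S z) :
    z ∈ S ∨ ∃ b e, b ∈ S ∧ Λ.d b ≠ 0 ∧ Λ.IsComposite S e ∧ Λ.d e ≠ 0 ∧
      Λ.s b = Λ.r e ∧ z = Λ.comp b e := by
  induction hz with
  | of_mem hx => exact .inl hx
  | @cons x y hx hy hxy ih =>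
    by_cases hdx : Λ.d x = 0
    · rwa [← Λ.s_vertex x hdx, hxy, Λ.id_comp]
    by_cases hdy : Λ.d y = 0
    · rw [← Λ.r_vertex y hdy, ← hxy, Λ.comp_id]
      exact .inl hx
    exact .inr ⟨x, y, hx, hdx, hy, hdy, hxy, rfl⟩

/-- Composites are finite in number because each nontrivial factor lowers the number of vertices
reachable from the range. -/
lemma finite_setOf_isComposite (hfin : {v : Λ.Path | Λ.IsVertex v}.Finite) (hnc : Λ.NoCycles)
    {S : Set Λ.Path} (hS : S.Finite) : {z | Λ.IsComposite S z}.Finite := by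
  let level n := {z | Λ.IsComposite S z ∧ (Λ.reach (Λ.r z)).ncard < n}
  have hlevel : ∀ n, (level n).Finite := by
    intro n
    induction n with
    | zero => simp [level]
    | succ n ih =>
      refine (hS.union (hS.image2 Λ.comp ih)).subset ?_
      rintro z ⟨hz, hzn⟩
      obtain hzS | ⟨b, e, hb, hdb, he, -, hbe, rfl⟩ := hz.mem_or_exists_comp
      · exact .inl hzS
      have hlt := Λ.ncard_reach_s_lt hfin hnc hdb
      rw [Λ.r_comp b e hbe] at hzn
      rw [hbe] at hlt
      exact .inr ⟨b, hb, e, ⟨he, by omega⟩, rfl⟩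
  refine (hlevel ({v : Λ.Path | Λ.IsVertex v}.ncard + 1)).subset fun z hz => ⟨hz, ?_⟩
  have := Λ.ncard_reach_le hfin (Λ.r z)
  omega

/-- Cutting `λ = (b e) a = c β ∈ MCE(b e, c)` at degree `d b ∨ d c` gives `λ = (b γ) δ = (c β₁) δ`
with `b γ ∈ MCE(b, c)` and `γ δ = e a ∈ MCE(γ, e)`. -/
lemma exists_tails_of_mem_MCE_comp {b e a c β : Λ.Path} (hbe : Λ.s b = Λ.r e)
    (hea : Λ.s e = Λ.r a) (hcβ : Λ.s c = Λ.r β) (heq : Λ.comp (Λ.comp b e) a = Λ.comp c β)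
    (hd : Λ.d (Λ.comp (Λ.comp b e) a) = Λ.d (Λ.comp b e) ⊔ Λ.d c) :
    ∃ γ β₁ δ, Λ.IsTail b c γ ∧ Λ.IsTail c b β₁ ∧ Λ.IsTail γ e δ ∧ Λ.IsTail e γ a ∧
      Λ.s β₁ = Λ.r δ ∧ β = Λ.comp β₁ δ ∧ Λ.d γ ≤ Λ.d c := by
  have hb_ea : Λ.s b = Λ.r (Λ.comp e a) := by rw [Λ.r_comp e a hea]; exact hbe
  have hlam : Λ.comp b (Λ.comp e a) = Λ.comp c β := by rw [← Λ.comp_assoc b e a hbe hea, heq]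
  have hdb : Λ.d (Λ.comp c β) = Λ.d b + Λ.d (Λ.comp e a) := by rw [← hlam, Λ.d_comp _ _ hb_ea]
  have hdc : Λ.d (Λ.comp c β) = Λ.d c + Λ.d β := Λ.d_comp c β hcβ
  rw [heq, Λ.d_comp b e hbe] at hd
  have hD : Λ.d b ⊔ Λ.d c ≤ Λ.d (Λ.comp c β) := hd ▸ sup_le_sup_right le_self_add _
  obtain ⟨γ, δ, hγ, hγδ, hγδe⟩ := Λ.exists_factor (Λ.comp e a) (m := Λ.d b ⊔ Λ.d c - Λ.d b)
    (tsub_le_iff_left.mpr (hdb ▸ hD))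
  obtain ⟨β₁, δ₂, hβ₁, hβ₁δ₂, rfl⟩ := Λ.exists_factor β (m := Λ.d b ⊔ Λ.d c - Λ.d c)
    (tsub_le_iff_left.mpr (hdc ▸ hD))
  have hbγ : Λ.s b = Λ.r γ := by rw [← Λ.r_comp γ δ hγδ, hγδe]; exact hb_ea
  have hcβ₁ : Λ.s c = Λ.r β₁ := by rw [← Λ.r_comp β₁ δ₂ hβ₁δ₂]; exact hcβ
  have hdbγ : Λ.d (Λ.comp b γ) = Λ.d b ⊔ Λ.d c := by
    rw [Λ.d_comp b γ hbγ, hγ, add_tsub_cancel_of_le le_sup_left]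
  have hdcβ₁ : Λ.d (Λ.comp c β₁) = Λ.d b ⊔ Λ.d c := by
    rw [Λ.d_comp c β₁ hcβ₁, hβ₁, add_tsub_cancel_of_le le_sup_right]
  obtain ⟨hbγc, rfl⟩ := Λ.comp_inj (by rwa [Λ.s_comp b γ hbγ]) (by rwa [Λ.s_comp c β₁ hcβ₁])
    (hdbγ.trans hdcβ₁.symm) (by
      rw [Λ.comp_assoc b γ δ hbγ hγδ, Λ.comp_assoc c β₁ δ₂ hcβ₁ hβ₁δ₂, hγδe, hlam])
  have hbcγ : Λ.comp b γ ∈ Λ.MCE b c := ⟨hdbγ, ⟨γ, hbγ, rfl⟩, ⟨β₁, hcβ₁, hbγc.symm⟩⟩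
  have hγe : Λ.comp e a ∈ Λ.MCE γ e := by
    refine ⟨?_, ⟨δ, hγδ, hγδe⟩, ⟨a, hea, rfl⟩⟩
    funext i
    have h₁ := congrFun hd i
    have h₂ := congrFun hdb i
    have h₃ := congrFun (Λ.d_comp e a hea) i
    simp only [hγ, Pi.add_apply, Pi.sup_apply, Pi.sub_apply] at h₁ h₂ h₃ ⊢
    omega
  refine ⟨γ, β₁, δ, ⟨hbγ, hbcγ⟩, ⟨hcβ₁, ?_⟩, ⟨hγδ, hγδe ▸ hγe⟩, ⟨hea, ?_⟩, hβ₁δ₂, rfl, ?_⟩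
  · rwa [Λ.mce_comm, ← hbγc]
  · rwa [Λ.mce_comm]
  · rw [hγ, tsub_le_iff_left]
    exact sup_le le_self_add le_add_self

lemma exists_isTail_of_isTail_comp_left {b e c a : Λ.Path} (hbe : Λ.s b = Λ.r e)
    (h : Λ.IsTail (Λ.comp b e) c a) :
    ∃ γ, Λ.IsTail b c γ ∧ Λ.IsTail e γ a ∧ Λ.d γ ≤ Λ.d c := by
  obtain ⟨ha, hd, -, ⟨β, hcβ, heq⟩⟩ := h
  obtain ⟨γ, -, -, hγ, -, -, ha', -, -, hγc⟩ := exists_tails_of_mem_MCE_comp hbe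
    (by rwa [← Λ.s_comp b e hbe]) hcβ heq.symm hd
  exact ⟨γ, hγ, ha', hγc⟩

lemma exists_isTail_of_isTail_comp_right {b e c β : Λ.Path} (hbe : Λ.s b = Λ.r e)
    (h : Λ.IsTail c (Λ.comp b e) β) :
    ∃ γ β₁ δ, Λ.IsTail b c γ ∧ Λ.IsTail c b β₁ ∧ Λ.IsTail γ e δ ∧
      Λ.s β₁ = Λ.r δ ∧ β = Λ.comp β₁ δ ∧ Λ.d γ ≤ Λ.d c := by
  obtain ⟨hcβ, hd, -, ⟨a, ha, heq⟩⟩ := h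
  obtain ⟨γ, β₁, δ, hγ, hβ₁, hδ, -, hβ₁δ, rfl, hγc⟩ := exists_tails_of_mem_MCE_comp hbe
    (by rwa [← Λ.s_comp b e hbe]) hcβ heq (by rw [heq, hd, sup_comm])
  exact ⟨γ, β₁, δ, hγ, hβ₁, hδ, hβ₁δ, rfl, hγc⟩

/-- Induction on `len x + len c`, peeling a nontrivial first factor off `x` or `c`. -/
theorem IsComposite.of_isTail {Y : Set Λ.Path} (hY : Λ.tails Y ⊆ Y) {x c a : Λ.Path}
    (hx : Λ.IsComposite Y x) (hc : Λ.IsComposite Y c) (h : Λ.IsTail x c a) :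
    Λ.IsComposite Y a := by
  obtain ⟨n, hn⟩ : ∃ n, Λ.len x + Λ.len c = n := ⟨_, rfl⟩
  induction n using Nat.strong_induction_on generalizing x c a with
  | _ n ih =>
  rcases hx.mem_or_exists_comp with hxY | ⟨b, e, hb, hdb, he, hde, hbe, rfl⟩
  · rcases hc.mem_or_exists_comp with hcY | ⟨b, e, hb, hdb, he, hde, hbe, rfl⟩
    · exact .of_mem (hY ⟨x, hxY, c, hcY, h⟩)
    obtain ⟨γ, β₁, δ, hγ, hβ₁, hδ, hβ₁δ, rfl, hγx⟩ := exists_isTail_of_isTail_comp_right hbe h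
    have := Λ.len_comp hbe
    have := Λ.len_pos hdb
    have := Λ.len_pos hde
    have := Λ.len_le_len hγx
    have hγY := ih _ (by omega) (.of_mem hb) hx hγ rfl
    exact (ih _ (by omega) hx (.of_mem hb) hβ₁ rfl).comp (ih _ (by omega) hγY he hδ rfl) hβ₁δ
  · obtain ⟨γ, hγ, ha, hγc⟩ := exists_isTail_of_isTail_comp_left hbe h
    have := Λ.len_comp hbe
    have := Λ.len_pos hdb
    have := Λ.len_pos hde
    have := Λ.len_le_len hγc
    exact ih _ (by omega) he (ih _ (by omega) (.of_mem hb) hc hγ rfl) ha rfl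

end KGraph

namespace CKFamily

variable {k : ℕ} {Λ : KGraph k} {B : Type*} [NonUnitalRing B] [StarRing B] (f : CKFamily Λ B)

def monomials (F : Set Λ.Path) : Set B :=
  {z | ∃ mu ∈ F, ∃ nu ∈ F, Λ.s mu = Λ.s nu ∧ f.t mu * star (f.t nu) = z}

lemma monomials_mono {F F' : Set Λ.Path} (h : F ⊆ F') : f.monomials F ⊆ f.monomials F' := by
  rintro _ ⟨mu, hmu, nu, hnu, hs, rfl⟩
  exact ⟨mu, h hmu, nu, h hnu, hs, rfl⟩

lemma monomials_finite {F : Set Λ.Path} (hF : F.Finite) : (f.monomials F).Finite :=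
  (hF.image2 (fun mu nu => f.t mu * star (f.t nu)) hF).subset
    fun _ ⟨mu, hmu, nu, hnu, _, hz⟩ => ⟨mu, hmu, nu, hnu, hz⟩

lemma star_mem_monomials {F : Set Λ.Path} {z : B} (hz : z ∈ f.monomials F) :
    star z ∈ f.monomials F := by
  obtain ⟨mu, hmu, nu, hnu, hs, rfl⟩ := hz
  exact ⟨nu, hnu, mu, hmu, hs.symm, by rw [star_mul, star_star]⟩

lemma t_mem_monomials {F : Set Λ.Path} {lam : Λ.Path} (hlam : lam ∈ F) (hs : Λ.s lam ∈ F) :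
    f.t lam ∈ f.monomials F := by
  have hv : Λ.IsVertex (Λ.s lam) := Λ.d_s lam
  refine ⟨lam, hlam, Λ.s lam, hs, (Λ.s_vertex _ hv).symm, ?_⟩
  rw [f.selfadjoint _ hv, f.mul_eq _ _ (Λ.r_vertex _ hv).symm, Λ.comp_id]

/-- By (CK3), `t_μ t_ν* t_σ t_τ* = ∑ t_{μα} t_{τβ}*` over `να = σβ ∈ MCE(ν, σ)`, and `α`, `β` are
tails of `(ν, σ)`, `(σ, ν)`. -/
lemma mul_mem_span_monomials {R : Type*} [Semiring R] [Module R B] (hFA : Λ.FinitelyAligned)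
    {Y : Set Λ.Path} (hY : Λ.tails Y ⊆ Y) {x y : B}
    (hx : x ∈ f.monomials {z | Λ.IsComposite Y z}) (hy : y ∈ f.monomials {z | Λ.IsComposite Y z}) :
    x * y ∈ Submodule.span R (f.monomials {z | Λ.IsComposite Y z}) := by
  obtain ⟨mu, hmu, nu, hnu, hmunu, rfl⟩ := hx
  obtain ⟨sg, hsg, tau, htau, hsgtau, rfl⟩ := hy
  have hfinP := Λ.MCEPairs_finite hFA nu sg
  have hck3 : star (f.t nu) * f.t sg = ∑ p ∈ hfinP.toFinset, f.t p.1 * star (f.t p.2) :=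
    (f.ck3 nu sg).trans (finsum_mem_eq_finite_toFinset_sum _ hfinP)
  rw [mul_assoc, ← mul_assoc (star _), hck3, Finset.sum_mul, Finset.mul_sum]
  refine Submodule.sum_mem _ fun p hp => Submodule.subset_span ?_
  rw [Set.Finite.mem_toFinset] at hp
  obtain ⟨hα, hβ⟩ := Λ.isTail_of_mem_MCEPairs hp
  have hα' : Λ.s mu = Λ.r p.1 := hmunu.trans hα.1
  have hβ' : Λ.s tau = Λ.r p.2 := hsgtau.symm.trans hβ.1
  refine ⟨Λ.comp mu p.1, hmu.comp (hnu.of_isTail hY hsg hα) hα',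
    Λ.comp tau p.2, htau.comp (hsg.of_isTail hY hnu hβ) hβ', ?_, ?_⟩
  · rw [Λ.s_comp _ _ hα', Λ.s_comp _ _ hβ', ← Λ.s_comp _ _ hα.1, ← Λ.s_comp _ _ hβ.1, hp.2.2.1]
  · rw [← f.mul_eq _ _ hα', ← f.mul_eq _ _ hβ', star_mul, mul_assoc, mul_assoc]

lemma monomials_subset_adjoin [Module ℂ B] [IsScalarTower ℂ B B] [SMulCommClass ℂ B B]
    [StarModule ℂ B] (F : Set Λ.Path) :
    f.monomials F ⊆ NonUnitalStarAlgebra.adjoin ℂ (Set.range f.t) := by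
  rintro _ ⟨mu, -, nu, -, -, rfl⟩
  exact mul_mem (NonUnitalStarAlgebra.subset_adjoin ℂ _ ⟨mu, rfl⟩)
    (star_mem (NonUnitalStarAlgebra.subset_adjoin ℂ _ ⟨nu, rfl⟩))

end CKFamily

lemma Submodule.mul_mem_span_of_forall_mul_mem {R A : Type*} [CommSemiring R]
    [NonUnitalNonAssocSemiring A] [Module R A] [IsScalarTower R A A] [SMulCommClass R A A]
    {G : Set A} (hG : ∀ a ∈ G, ∀ b ∈ G, a * b ∈ Submodule.span R G) {x y : A}
    (hx : x ∈ Submodule.span R G) (hy : y ∈ Submodule.span R G) : x * y ∈ Submodule.span R G := by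
  have : Submodule.map₂ (LinearMap.mul R A) (Submodule.span R G) (Submodule.span R G) ≤
      Submodule.span R G := by
    rw [Submodule.map₂_span_span, Submodule.span_le]
    rintro - ⟨a, ha, b, hb, rfl⟩
    exact hG a ha b hb
  exact this (Submodule.apply_mem_map₂ _ hx hy)

lemma NonUnitalStarAlgebra.finiteDimensional_adjoin {𝕜 A : Type*} [Field 𝕜] [StarRing 𝕜]
    [NonUnitalRing A] [StarRing A] [Module 𝕜 A] [IsScalarTower 𝕜 A A] [SMulCommClass 𝕜 A A]
    [StarModule 𝕜 A] {G : Set A} (hG : G.Finite) (hstar : ∀ a ∈ G, star a ∈ G)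
    (hmul : ∀ a ∈ G, ∀ b ∈ G, a * b ∈ Submodule.span 𝕜 G) :
    FiniteDimensional 𝕜 (NonUnitalStarAlgebra.adjoin 𝕜 G) := by
  have : FiniteDimensional 𝕜 (Submodule.span 𝕜 G) := FiniteDimensional.span_of_finite 𝕜 hG
  have hle : (NonUnitalStarAlgebra.adjoin 𝕜 G).toSubmodule ≤ Submodule.span 𝕜 G := by
    rw [NonUnitalStarAlgebra.adjoin_eq_span, Submodule.span_le]
    refine (Subsemigroup.closure_le (S := ⟨(Submodule.span 𝕜 G : Set A), fun ha hb =>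
      Submodule.mul_mem_span_of_forall_mul_mem hmul ha hb⟩)).mpr ?_
    rintro a (ha | ha)
    · exact Submodule.subset_span ha
    · exact Submodule.subset_span (star_star a ▸ hstar _ ha)
  exact Submodule.finiteDimensional_of_le hle

lemma isAFIn_topologicalClosure_adjoin {A : Type*} [NonUnitalCStarAlgebra A] {s : Set A}
    (T : ℕ → NonUnitalStarSubalgebra ℂ A) (hmono : Monotone T)
    (hfd : ∀ n, FiniteDimensional ℂ (T n)) (hle : ∀ n, T n ≤ NonUnitalStarAlgebra.adjoin ℂ s)
    (hs : s ⊆ ⋃ n, (T n : Set A)) :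
    IsAFIn A ((NonUnitalStarAlgebra.adjoin ℂ s).topologicalClosure : Set A) := by
  have hU := NonUnitalStarSubalgebra.coe_iSup_of_directed hmono.directed_le
  refine ⟨T, hmono, fun n => (hle n).trans (NonUnitalStarSubalgebra.le_topologicalClosure _),
    hfd, fun x hx => ?_⟩
  rw [← hU]
  exact closure_mono (NonUnitalStarAlgebra.adjoin_le (hU ▸ hs)) hx

lemma exists_monotone_finite_exhaustion (α : Type*) [Countable α] :
    ∃ E : ℕ → Set α, Monotone E ∧ (∀ n, (E n).Finite) ∧ ∀ x, ∃ n, x ∈ E n := by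
  obtain ⟨enc, henc⟩ := exists_injective_nat α
  exact ⟨fun n => enc ⁻¹' Set.Iio n, fun _ _ h _ hx => lt_of_lt_of_le hx h,
    fun n => (Set.finite_Iio n).preimage henc.injOn, fun x => ⟨enc x + 1, Nat.lt_succ_self _⟩⟩

/-- If `Λ` is a finitely aligned `k`-graph with finitely many vertices and
no cycles, then the C*-subalgebra of `B` generated by any Cuntz–Krieger `Λ`-family is AF. -/
theorem stmt1 {k : ℕ} (Λ : KGraph k) (hFA : Λ.FinitelyAligned)
    (hfin : {v : Λ.Path | Λ.IsVertex v}.Finite) (hnc : Λ.NoCycles)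
    (B : Type*) [NonUnitalCStarAlgebra B] (f : CKFamily Λ B) :
    IsAFIn B ((NonUnitalStarAlgebra.adjoin ℂ (Set.range f.t)).topologicalClosure : Set B) := by
  have := Λ.countable
  obtain ⟨E, hEmono, hEfin, hEcover⟩ := exists_monotone_finite_exhaustion Λ.Path
  let F n := {z | Λ.IsComposite (Λ.tailClosure (E n)) z}
  have hFmono : Monotone F := fun _ _ h _ hz => hz.mono (Λ.tailClosure_mono (hEmono h))
  have hFfin n : (F n).Finite :=
    KGraph.finite_setOf_isComposite hfin hnc (Λ.tailClosure_finite hFA hfin hnc (hEfin n))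
  refine isAFIn_topologicalClosure_adjoin
    (fun n => NonUnitalStarAlgebra.adjoin ℂ (f.monomials (F n)))
    (fun _ _ h => NonUnitalStarAlgebra.adjoin_mono (f.monomials_mono (hFmono h)))
    (fun n => NonUnitalStarAlgebra.finiteDimensional_adjoin (f.monomials_finite (hFfin n))
      (fun _ => f.star_mem_monomials)
      (fun _ ha _ hb => f.mul_mem_span_monomials hFA (Λ.tails_tailClosure_subset (E n)) ha hb))
    (fun n => NonUnitalStarAlgebra.adjoin_le (f.monomials_subset_adjoin (F n))) ?_
  rintro _ ⟨lam, rfl⟩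
  obtain ⟨n, hn⟩ := hEcover lam
  have hsub := Λ.subset_tailClosure (E n)
  exact Set.mem_iUnion.mpr ⟨n, NonUnitalStarAlgebra.subset_adjoin ℂ _ (f.t_mem_monomials
    (.of_mem (hsub (.inl hn))) (.of_mem (hsub (.inr ⟨lam, hn, rfl⟩))))⟩
end

section
/- Let Λ be a row-finite finitely aligned k-graph such that Λ⁰ is finite and Λ contains no cycles, i.e. no λ ∈ Λ ∖ Λ⁰ with r(λ) = s(λ). Let Λ⁰_src := {v ∈ Λ⁰ : vΛ = {v}}. Let {t_λ : λ ∈ Λ} be a Cuntz–Krieger Λ-family in a C*-algebra B with t_v ≠ 0 for every v ∈ Λ⁰_src. Then each set Λv (v ∈ Λ⁰_src) is finite, and there is a *-isomorphism from the finite-dimensional C*-algebra ⊕_{v ∈ Λ⁰_src} M_{Λv}(ℂ) (full matrix algebras with entries indexed by Λv × Λv) onto the C*-subalgebra of B generated by {t_λ : λ ∈ Λ}, taking each matrix unit θ_{α,β} (α, β ∈ Λv, v ∈ Λ⁰_src) to t_α t_β*. -/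
open scoped ComplexOrder ENat

/-! Without cycles, the prefixes of a path along one coordinate direction have distinct sources, so
degrees are bounded by the number of vertices and a row-finite `Λ` is finite; in particular every
vertex `v` receives a path from a source. For paths `β, γ` starting at sources, (CK3) gives
`t_β* t_γ = δ_{β,γ} t_{s β}`, so the `t_α t_β*` form a system of matrix units whose diagonal is
nonzero when the source projections are, and `θ_{α,β} ↦ t_α t_β*` is an injective
`*`-homomorphism. The paths from sources to `v` form a finite exhaustive set, and (CK4) for it reads
`t_v = Σ t_τ t_τ*`; hence `t_μ = Σ t_{μτ} t_τ*` lies in the image, which is finite-dimensional and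
therefore closed. -/

namespace KGraph

variable {k : ℕ} (Λ : KGraph k)

def IsPrefix (p lam : Λ.Path) : Prop := ∃ q, Λ.s p = Λ.r q ∧ Λ.comp p q = lam

def pathsFromSources (v : Λ.Path) : Set Λ.Path := {τ | Λ.r τ = v ∧ Λ.IsSource (Λ.s τ)}

variable {Λ}

lemma r_s (lam : Λ.Path) : Λ.r (Λ.s lam) = Λ.s lam := Λ.r_vertex _ (Λ.d_s lam)

lemma comp_mem_MCE {lam τ : Λ.Path} (h : Λ.s lam = Λ.r τ) :
    Λ.comp lam τ ∈ Λ.MCE lam (Λ.comp lam τ) := by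
  refine ⟨?_, ⟨τ, h, rfl⟩, ⟨_, (Λ.r_s _).symm, Λ.comp_id _⟩⟩
  rw [Λ.d_comp _ _ h]
  exact (sup_eq_right.2 le_self_add).symm

lemma exists_isPrefix (lam : Λ.Path) {m : Fin k → ℕ} (hm : m ≤ Λ.d lam) :
    ∃ p, Λ.d p = m ∧ Λ.IsPrefix p lam := by
  obtain ⟨⟨p, q⟩, ⟨hp, -, hpq, rfl⟩, -⟩ :=
    Λ.factor lam m (Λ.d lam - m) (add_tsub_cancel_of_le hm).symm
  exact ⟨p, hp, q, hpq, rfl⟩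

lemma IsPrefix.d_le {p lam : Λ.Path} (hp : Λ.IsPrefix p lam) : Λ.d p ≤ Λ.d lam := by
  obtain ⟨q, hpq, rfl⟩ := hp
  rw [Λ.d_comp _ _ hpq]
  exact le_self_add

lemma IsPrefix.eq_of_d_eq {p p' lam : Λ.Path} (hp : Λ.IsPrefix p lam) (hp' : Λ.IsPrefix p' lam)
    (hd : Λ.d p = Λ.d p') : p = p' := by
  obtain ⟨q, hpq, rfl⟩ := hp
  obtain ⟨q', hpq', hc⟩ := hp'
  have hq : Λ.d q' = Λ.d q := by
    have := Λ.d_comp p' q' hpq'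
    rw [hc, Λ.d_comp p q hpq, hd] at this
    exact (add_left_cancel this).symm
  exact congrArg Prod.fst ((Λ.factor _ _ _ (Λ.d_comp p q hpq)).unique (y₁ := (p, q))
    (y₂ := (p', q')) ⟨rfl, rfl, hpq, rfl⟩ ⟨hd.symm, hq, hpq', hc⟩)

lemma IsPrefix.exists_comp_of_d_le {p p' lam : Λ.Path} (hp : Λ.IsPrefix p lam)
    (hp' : Λ.IsPrefix p' lam) (hle : Λ.d p ≤ Λ.d p') :
    ∃ a, Λ.s p = Λ.r a ∧ Λ.comp p a = p' := by
  obtain ⟨q, hpq, rfl⟩ := hp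
  have hdq : Λ.d p' - Λ.d p ≤ Λ.d q := by
    rw [tsub_le_iff_left, ← Λ.d_comp _ _ hpq]
    exact hp'.d_le
  obtain ⟨a, hda, b, hab, rfl⟩ := exists_isPrefix q hdq
  have hpa : Λ.s p = Λ.r a := by rw [hpq, Λ.r_comp _ _ hab]
  refine ⟨a, hpa, IsPrefix.eq_of_d_eq ⟨b, ?_, ?_⟩ hp' ?_⟩
  · rw [Λ.s_comp _ _ hpa, hab]
  · rw [Λ.comp_assoc _ _ _ hpa hab]
  · rw [Λ.d_comp _ _ hpa, hda, add_tsub_cancel_of_le hle]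

lemma IsPrefix.s_ne_of_d_lt (hnc : Λ.NoCycles) {p p' lam : Λ.Path} (hp : Λ.IsPrefix p lam)
    (hp' : Λ.IsPrefix p' lam) (hlt : Λ.d p < Λ.d p') : Λ.s p ≠ Λ.s p' := by
  obtain ⟨a, hpa, rfl⟩ := hp.exists_comp_of_d_le hp' hlt.le
  intro hs
  have hda : Λ.d a = 0 := hnc a (by rw [← hpa, hs, Λ.s_comp _ _ hpa])
  rw [Λ.d_comp _ _ hpa, hda, add_zero] at hlt
  exact hlt.false

lemma d_lt_card_vertices (hnc : Λ.NoCycles) (hfin : {v : Λ.Path | Λ.IsVertex v}.Finite)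
    (lam : Λ.Path) (i : Fin k) : Λ.d lam i < {v : Λ.Path | Λ.IsVertex v}.ncard := by
  have : Finite {v : Λ.Path | Λ.IsVertex v} := hfin.to_subtype
  have hle (j : Fin (Λ.d lam i + 1)) : Pi.single i (j : ℕ) ≤ Λ.d lam := by
    intro i'
    rcases eq_or_ne i' i with rfl | h
    · simpa using Nat.lt_succ_iff.mp j.2
    · simp [h]
  choose P hPd hP using fun j => exists_isPrefix lam (hle j)
  have hinj : Function.Injective
      fun j => (⟨Λ.s (P j), Λ.d_s _⟩ : {v : Λ.Path | Λ.IsVertex v}) := by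
    refine .of_lt_imp_ne fun j j' hjj' h => (hP j).s_ne_of_d_lt hnc (hP j') ?_ congr($h.1)
    rw [hPd, hPd]
    exact Pi.single_strictMono i hjj'
  have := Nat.card_le_card_of_injective _ hinj
  rwa [Nat.card_fin] at this

lemma finite_path_of_noCycles (hnc : Λ.NoCycles) (hRF : Λ.RowFinite)
    (hfin : {v : Λ.Path | Λ.IsVertex v}.Finite) : Finite Λ.Path := by
  rw [← Set.finite_univ_iff]
  refine ((hfin.biUnion fun v hv => (Set.finite_Iic
      (fun _ => {v : Λ.Path | Λ.IsVertex v}.ncard)).biUnion fun n _ => hRF v n hv)).subset ?_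
  intro lam _
  simp only [Set.mem_iUnion]
  exact ⟨Λ.r lam, Λ.d_r lam, Λ.d lam,
    fun i => (d_lt_card_vertices hnc hfin lam i).le, rfl, rfl⟩

/-- A path into `w` of maximal total degree must start at a source. -/
lemma pathsFromSources_nonempty [Finite Λ.Path] {w : Λ.Path} (hw : Λ.IsVertex w) :
    (Λ.pathsFromSources w).Nonempty := by
  obtain ⟨lam, hlam, hmax⟩ := Set.exists_max_image {lam | Λ.r lam = w}
    (fun lam => ∑ i, Λ.d lam i) (Set.toFinite _) ⟨w, Λ.r_vertex w hw⟩
  refine ⟨lam, hlam, Λ.d_s lam, fun mu hmu => ?_⟩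
  have hd : Λ.d mu = 0 := by
    have := hmax (Λ.comp lam mu) (show Λ.r _ = w by rw [Λ.r_comp _ _ hmu.symm, hlam])
    simp only [Λ.d_comp _ _ hmu.symm, Pi.add_apply, Finset.sum_add_distrib,
      add_le_iff_nonpos_right, nonpos_iff_eq_zero, Finset.sum_eq_zero_iff] at this
    exact funext fun i => this i (Finset.mem_univ i)
  rw [← Λ.r_vertex mu hd, hmu]

lemma exhaustive_pathsFromSources [Finite Λ.Path] {v : Λ.Path} :
    Λ.Exhaustive v (Λ.pathsFromSources v) := by
  intro lam hlam
  obtain ⟨τ, hτ, hτs⟩ := pathsFromSources_nonempty (Λ.d_s lam)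
  have hlτ : Λ.s lam = Λ.r τ := hτ.symm
  exact ⟨Λ.comp lam τ, ⟨by rw [Λ.r_comp _ _ hlτ, hlam], by rwa [Λ.s_comp _ _ hlτ]⟩,
    _, comp_mem_MCE hlτ⟩

lemma mem_MCEPairs_of_isSource {β γ : Λ.Path} (hβ : Λ.IsSource (Λ.s β))
    (hγ : Λ.IsSource (Λ.s γ)) {p : Λ.Path × Λ.Path} :
    p ∈ Λ.MCEPairs β γ ↔ β = γ ∧ p = (Λ.s β, Λ.s β) := by
  constructor
  · rintro ⟨ha, hb, hab, -⟩
    rw [hβ.2 _ ha.symm, hγ.2 _ hb.symm, Λ.comp_id, Λ.comp_id] at hab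
    subst hab
    exact ⟨rfl, Prod.ext (hβ.2 _ ha.symm) (hβ.2 _ hb.symm)⟩
  · rintro ⟨rfl, rfl⟩
    refine ⟨(Λ.r_s β).symm, (Λ.r_s β).symm, rfl, ?_⟩
    simpa only [Λ.comp_id] using comp_mem_MCE (Λ.r_s β).symm

end KGraph

lemma foldl_mul_sub_eq_sub_add_sum {R ι : Type*} [NonUnitalRing R] {p : R} (hp : p * p = p)
    (q : ι → R) : ∀ (l : List ι) (x : R), x * p = x →
      (∀ i ∈ l, p * q i = q i ∧ q i * p = q i ∧ x * q i = 0) →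
      l.Pairwise (fun i j => q i * q j = 0) →
      (l.map (p - q ·)).foldl (· * ·) (p - x) = p - (x + (l.map q).sum)
  | [], _, _, _, _ => by simp
  | b :: l, x, hx, hq, hl => by
    obtain ⟨hpb, hbp, hxb⟩ := hq b List.mem_cons_self
    have hstep : (p - x) * (p - q b) = p - (x + q b) := by
      simp only [sub_mul, mul_sub, hp, hpb, hx, hxb]
      abel
    rw [List.map_cons, List.foldl_cons, hstep, List.map_cons, List.sum_cons, ← add_assoc]
    refine foldl_mul_sub_eq_sub_add_sum hp q l _ (by rw [add_mul, hx, hbp]) (fun i hi => ?_)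
      (List.pairwise_cons.1 hl).2
    obtain ⟨hpi, hip, hxi⟩ := hq i (List.mem_cons_of_mem b hi)
    exact ⟨hpi, hip, by rw [add_mul, hxi, (List.pairwise_cons.1 hl).1 i hi, add_zero]⟩

section MatrixUnits

variable {ι : Type*} {n : ι → Type*} {A : Type*} [Mul A] [Zero A] [Star A]

structure IsMatrixUnits (e : (i : ι) → n i → n i → A) : Prop where
  mul_self : ∀ i a b c, e i a b * e i b c = e i a c
  mul_of_ne : ∀ i a b c d, b ≠ c → e i a b * e i c d = 0
  mul_of_ne_block : ∀ i j, i ≠ j → ∀ a b c d, e i a b * e j c d = 0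
  star_eq : ∀ i a b, star (e i a b) = e i b a

end MatrixUnits

namespace IsMatrixUnits

variable {ι : Type*} {n : ι → Type*} [Fintype ι] [∀ i, Fintype (n i)] {R : Type*} [CommRing R]
  {A : Type*} [NonUnitalSemiring A] [Module R A] {e : (i : ι) → n i → n i → A}

variable (R) in
def linearMap (e : (i : ι) → n i → n i → A) : ((i : ι) → Matrix (n i) (n i) R) →ₗ[R] A where
  toFun x := ∑ i, ∑ a, ∑ b, x i a b • e i a b
  map_add' x y := by simp only [Pi.add_apply, Matrix.add_apply, add_smul, Finset.sum_add_distrib]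
  map_smul' c x := by
    simp only [Pi.smul_apply, Matrix.smul_apply, smul_eq_mul, mul_smul, Finset.smul_sum,
      RingHom.id_apply]

section Mul

variable [DecidableEq ι] [∀ i, DecidableEq (n i)]

lemma linearMap_single (i : ι) (a b : n i) (c : R) :
    linearMap R e (Pi.single i (Matrix.single a b c)) = c • e i a b := by
  simp only [linearMap, LinearMap.coe_mk, AddHom.coe_mk]
  rw [Finset.sum_eq_single i (fun j _ hj => by simp [hj]) (by simp), Pi.single_eq_same,
    Finset.sum_eq_single a (fun a' _ ha => by simp [Ne.symm ha]) (by simp),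
    Finset.sum_eq_single b (fun b' _ hb => by simp [Ne.symm hb]) (by simp),
    Matrix.single_apply_same]

variable [StarRing A] [IsScalarTower R A A] [SMulCommClass R A A]

lemma linearMap_mul (he : IsMatrixUnits e) (x y : (i : ι) → Matrix (n i) (n i) R) :
    linearMap R e (x * y) = linearMap R e x * linearMap R e y := by
  let b := Pi.basis fun i => Matrix.stdBasis R (n i) (n i)
  suffices (LinearMap.mul R _).compr₂ (linearMap R e) =
      (LinearMap.mul R A).compl₁₂ (linearMap R e) (linearMap R e) from
    congr($this x y)
  refine LinearMap.ext_basis b b fun ⟨i, a, a'⟩ ⟨j, c, c'⟩ => ?_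
  simp only [b, LinearMap.compr₂_apply, LinearMap.compl₁₂_apply, LinearMap.mul_apply',
    Pi.basis_apply, Matrix.stdBasis_eq_single, linearMap_single, one_smul]
  rcases eq_or_ne i j with rfl | hij
  · rw [← Pi.single_mul]
    rcases eq_or_ne a' c with rfl | hac
    · rw [Matrix.single_mul_single_same, one_mul, linearMap_single, one_smul, he.mul_self]
    · rw [Matrix.single_mul_single_of_ne (h := hac), Pi.single_zero, map_zero,
        he.mul_of_ne _ _ _ _ _ hac]
  · rw [← Pi.single_mul_left, Pi.single_eq_of_ne hij, mul_zero, Pi.single_zero, map_zero,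
      he.mul_of_ne_block _ _ hij]

end Mul

lemma linearMap_star [StarRing R] [StarRing A] [StarModule R A] (he : IsMatrixUnits e)
    (x : (i : ι) → Matrix (n i) (n i) R) :
    linearMap R e (star x) = star (linearMap R e x) := by
  simp only [linearMap, LinearMap.coe_mk, AddHom.coe_mk, star_sum, star_smul, he.star_eq]
  exact Finset.sum_congr rfl fun i _ => Finset.sum_comm

variable [DecidableEq ι] [∀ i, DecidableEq (n i)] [StarRing R] [StarRing A] [StarModule R A]
  [IsScalarTower R A A] [SMulCommClass R A A]

variable (R) in
def toNonUnitalStarAlgHom (he : IsMatrixUnits e) :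
    ((i : ι) → Matrix (n i) (n i) R) →⋆ₙₐ[R] A where
  __ := linearMap R e
  map_zero' := (linearMap R e).map_zero
  map_mul' := he.linearMap_mul
  map_star' := he.linearMap_star

lemma coe_toNonUnitalStarAlgHom (he : IsMatrixUnits e) :
    ⇑(he.toNonUnitalStarAlgHom R) = linearMap R e := rfl

lemma toNonUnitalStarAlgHom_apply (he : IsMatrixUnits e) (x : (i : ι) → Matrix (n i) (n i) R) :
    he.toNonUnitalStarAlgHom R x = ∑ i, ∑ a, ∑ b, x i a b • e i a b := rfl

lemma toNonUnitalStarAlgHom_single (he : IsMatrixUnits e) (i : ι) (a b : n i) (c : R) :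
    he.toNonUnitalStarAlgHom R (Pi.single i (Matrix.single a b c)) = c • e i a b :=
  linearMap_single i a b c

/-- Compressing by the diagonal units `e i a a`, `e i b b` isolates the `(a, b)` entry. -/
lemma toNonUnitalStarAlgHom_injective [IsDomain R] [Module.IsTorsionFree R A] (he : IsMatrixUnits e)
    (hne : ∀ i a, e i a a ≠ 0) : Function.Injective (he.toNonUnitalStarAlgHom R) := by
  set Φ := he.toNonUnitalStarAlgHom R
  refine (injective_iff_map_eq_zero Φ).2 fun x hx => funext fun i => Matrix.ext fun a b => ?_
  have hcompress : Φ (Pi.single i (Matrix.single a a 1)) * Φ x *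
      Φ (Pi.single i (Matrix.single b b 1)) = x i a b • e i a b := by
    rw [← map_mul, ← map_mul, ← Pi.single_mul_left, ← Pi.single_mul,
      Matrix.single_mul_mul_single, one_mul, mul_one, toNonUnitalStarAlgHom_single]
  have heab : e i a b ≠ 0 := fun h => hne i a (by rw [← he.mul_self i a b a, h, zero_mul])
  rwa [hx, mul_zero, zero_mul, eq_comm, smul_eq_zero_iff_left heab] at hcompress

end IsMatrixUnits

namespace CKFamily

variable {k : ℕ} {Λ : KGraph k} {B : Type*} [NonUnitalRing B] [StarRing B] (f : CKFamily Λ B)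

def matrixUnit (α β : Λ.Path) : B := f.t α * star (f.t β)

lemma t_mul_t_s (mu : Λ.Path) : f.t mu * f.t (Λ.s mu) = f.t mu := by
  rw [f.mul_eq _ _ (Λ.r_s mu).symm, Λ.comp_id]

lemma t_r_mul_matrixUnit (α β : Λ.Path) : f.t (Λ.r α) * f.matrixUnit α β = f.matrixUnit α β := by
  rw [matrixUnit, ← mul_assoc, f.mul_eq _ _ (Λ.s_vertex _ (Λ.d_r α)), Λ.id_comp]

lemma matrixUnit_mul_t_r (α β : Λ.Path) : f.matrixUnit α β * f.t (Λ.r β) = f.matrixUnit α β := by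
  rw [matrixUnit, mul_assoc, ← f.selfadjoint _ (Λ.d_r β), ← star_mul,
    f.mul_eq _ _ (Λ.s_vertex _ (Λ.d_r β)), Λ.id_comp]

lemma star_t_mul_t_self {β : Λ.Path} (hβ : Λ.IsSource (Λ.s β)) :
    star (f.t β) * f.t β = f.t (Λ.s β) := by
  have hpairs : Λ.MCEPairs β β = {(Λ.s β, Λ.s β)} :=
    Set.ext fun p => by simp [KGraph.mem_MCEPairs_of_isSource hβ hβ]
  rw [f.ck3, hpairs, finsum_mem_singleton, f.selfadjoint _ (Λ.d_s β), f.idem _ (Λ.d_s β)]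

lemma star_t_mul_t_of_ne {β γ : Λ.Path} (hβ : Λ.IsSource (Λ.s β)) (hγ : Λ.IsSource (Λ.s γ))
    (h : β ≠ γ) : star (f.t β) * f.t γ = 0 := by
  have hpairs : Λ.MCEPairs β γ = ∅ := Set.eq_empty_of_forall_notMem fun _ hp =>
    h ((KGraph.mem_MCEPairs_of_isSource hβ hγ).1 hp).1
  rw [f.ck3, hpairs, finsum_mem_empty]

lemma matrixUnit_mul_self {α β : Λ.Path} (hαβ : Λ.s α = Λ.s β) (hβ : Λ.IsSource (Λ.s β))
    (γ : Λ.Path) : f.matrixUnit α β * f.matrixUnit β γ = f.matrixUnit α γ := by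
  rw [matrixUnit, matrixUnit, mul_assoc, ← mul_assoc (star _), f.star_t_mul_t_self hβ,
    ← mul_assoc, ← hαβ, f.t_mul_t_s, matrixUnit]

lemma matrixUnit_mul_of_ne {β γ : Λ.Path} (hβ : Λ.IsSource (Λ.s β)) (hγ : Λ.IsSource (Λ.s γ))
    (h : β ≠ γ) (α δ : Λ.Path) : f.matrixUnit α β * f.matrixUnit γ δ = 0 := by
  rw [matrixUnit, matrixUnit, mul_assoc, ← mul_assoc (star _), f.star_t_mul_t_of_ne hβ hγ h,
    zero_mul, mul_zero]

lemma star_matrixUnit (α β : Λ.Path) : star (f.matrixUnit α β) = f.matrixUnit β α := by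
  rw [matrixUnit, matrixUnit, star_mul, star_star]

lemma matrixUnit_self_ne_zero {α : Λ.Path} (hα : Λ.IsSource (Λ.s α)) (h : f.t (Λ.s α) ≠ 0) :
    f.matrixUnit α α ≠ 0 := by
  intro h0
  apply h
  calc f.t (Λ.s α) = star (f.t α) * f.t α * (star (f.t α) * f.t α) := by
        rw [f.star_t_mul_t_self hα, f.idem _ (Λ.d_s α)]
    _ = star (f.t α) * f.matrixUnit α α * f.t α := by simp only [matrixUnit, mul_assoc]
    _ = 0 := by rw [h0, mul_zero, zero_mul]

lemma isMatrixUnits : IsMatrixUnits fun (v : {v : Λ.Path // Λ.IsSource v})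
    (α β : {lam : Λ.Path // Λ.s lam = v.1}) => f.matrixUnit α β := by
  have hsrc (v : {v : Λ.Path // Λ.IsSource v}) (α : {lam : Λ.Path // Λ.s lam = v.1}) :
      Λ.IsSource (Λ.s α) := by
    rw [α.2]
    exact v.2
  refine ⟨fun v α β γ => f.matrixUnit_mul_self (α.2.trans β.2.symm) (hsrc v β) γ,
    fun v α β γ δ h => f.matrixUnit_mul_of_ne (hsrc v β) (hsrc v γ) (Subtype.coe_ne_coe.2 h) α δ,
    fun v w hvw α β γ δ => f.matrixUnit_mul_of_ne (hsrc v β) (hsrc w γ) ?_ α δ,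
    fun v α β => f.star_matrixUnit α β⟩
  intro h
  exact hvw (Subtype.ext (by rw [← β.2, h, γ.2]))

variable [Finite Λ.Path]

/-- (CK4) applied to the finite exhaustive set `pathsFromSources v`, whose range projections are
mutually orthogonal. -/
lemma t_vertex_eq_finsum {v : Λ.Path} (hv : Λ.IsVertex v) :
    f.t v = ∑ᶠ τ ∈ Λ.pathsFromSources v, f.matrixUnit τ τ := by
  have hfin := Set.toFinite (Λ.pathsFromSources v)
  obtain ⟨a, l, hal⟩ := List.exists_cons_of_ne_nil (l := hfin.toFinset.toList)
    (by simpa using (KGraph.pathsFromSources_nonempty hv).ne_empty)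
  have hmem (τ : Λ.Path) : τ ∈ a :: l ↔ τ ∈ Λ.pathsFromSources v := by
    rw [← hal, Finset.mem_toList, Set.Finite.mem_toFinset]
  have hnd : (a :: l).Nodup := hal ▸ hfin.toFinset.nodup_toList
  obtain ⟨ha, hl⟩ := List.nodup_cons.1 hnd
  have hmem_l (τ : Λ.Path) (hτ : τ ∈ l) : τ ∈ Λ.pathsFromSources v :=
    (hmem τ).1 (List.mem_cons_of_mem a hτ)
  have horth {σ τ : Λ.Path} (hσ : σ ∈ Λ.pathsFromSources v) (hτ : τ ∈ Λ.pathsFromSources v)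
      (h : σ ≠ τ) : f.matrixUnit σ σ * f.matrixUnit τ τ = 0 :=
    f.matrixUnit_mul_of_ne hσ.2 hτ.2 h σ τ
  have hproj {τ : Λ.Path} (hτ : τ ∈ Λ.pathsFromSources v) :
      f.t v * f.matrixUnit τ τ = f.matrixUnit τ τ ∧
        f.matrixUnit τ τ * f.t v = f.matrixUnit τ τ := by
    rw [← hτ.1]
    exact ⟨f.t_r_mul_matrixUnit τ τ, f.matrixUnit_mul_t_r τ τ⟩
  have hck4 := f.ck4 v hv a l hnd (fun τ hτ => ((hmem τ).1 hτ).1)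
    (by
      rw [show {lam | lam ∈ a :: l} = Λ.pathsFromSources v from Set.ext hmem]
      exact KGraph.exhaustive_pathsFromSources)
  have ha_mem : a ∈ Λ.pathsFromSources v := (hmem a).1 List.mem_cons_self
  have hfoldl := foldl_mul_sub_eq_sub_add_sum (f.idem v hv) (fun τ => f.matrixUnit τ τ) l
    (f.matrixUnit a a) (hproj ha_mem).2
    (fun τ hτ => ⟨(hproj (hmem_l τ hτ)).1, (hproj (hmem_l τ hτ)).2,
      horth ha_mem (hmem_l τ hτ) fun h => ha (h ▸ hτ)⟩)
    (hl.pairwise_of_forall_ne fun σ hσ τ hτ => horth (hmem_l σ hσ) (hmem_l τ hτ))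
  rw [finsum_mem_eq_finite_toFinset_sum _ hfin, ← Finset.sum_map_toList, hal, List.map_cons,
    List.sum_cons]
  exact sub_eq_zero.1 (hfoldl.symm.trans hck4)

lemma t_eq_finsum (mu : Λ.Path) :
    f.t mu = ∑ᶠ τ ∈ Λ.pathsFromSources (Λ.s mu), f.matrixUnit (Λ.comp mu τ) τ := by
  conv_lhs => rw [← f.t_mul_t_s mu, f.t_vertex_eq_finsum (Λ.d_s mu)]
  rw [mul_finsum_mem' _ _ (Set.toFinite _)]
  refine finsum_mem_congr rfl fun τ hτ => ?_
  rw [matrixUnit, matrixUnit, ← mul_assoc, f.mul_eq _ _ hτ.1.symm]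

variable {R : Type*} [CommRing R] [StarRing R] [Module R B] [IsScalarTower R B B]
  [SMulCommClass R B B] [StarModule R B] [DecidableEq Λ.Path]
  [Fintype {v : Λ.Path // Λ.IsSource v}] [∀ v : {v : Λ.Path // Λ.IsSource v},
    Fintype {lam : Λ.Path // Λ.s lam = v.1}]

lemma range_toNonUnitalStarAlgHom :
    NonUnitalStarAlgHom.range (f.isMatrixUnits.toNonUnitalStarAlgHom R) =
      NonUnitalStarAlgebra.adjoin R (Set.range f.t) := by
  apply le_antisymm
  · intro y hy
    obtain ⟨x, rfl⟩ := (NonUnitalStarAlgHom.mem_range _).1 hy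
    rw [IsMatrixUnits.toNonUnitalStarAlgHom_apply]
    exact sum_mem fun v _ => sum_mem fun α _ => sum_mem fun β _ => SMulMemClass.smul_mem _ <|
      mul_mem (NonUnitalStarAlgebra.subset_adjoin R _ ⟨α, rfl⟩)
        (star_mem (NonUnitalStarAlgebra.subset_adjoin R _ ⟨β, rfl⟩))
  · refine NonUnitalStarAlgebra.adjoin_le ?_
    rintro _ ⟨mu, rfl⟩
    rw [f.t_eq_finsum mu]
    refine finsum_mem_induction _ (zero_mem _) (fun _ _ => add_mem) fun τ hτ => ?_
    have := NonUnitalStarAlgHom.mem_range_self (f.isMatrixUnits.toNonUnitalStarAlgHom R)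
      (Pi.single (⟨Λ.s τ, hτ.2⟩ : {v : Λ.Path // Λ.IsSource v})
        (Matrix.single ⟨Λ.comp mu τ, Λ.s_comp _ _ hτ.1.symm⟩ ⟨τ, rfl⟩ (1 : R)))
    rwa [IsMatrixUnits.toNonUnitalStarAlgHom_single, one_smul] at this

end CKFamily

theorem stmt2_general {k : ℕ} (Λ : KGraph k) [DecidableEq Λ.Path]
    (hRF : Λ.RowFinite)
    (hfin : {v : Λ.Path | Λ.IsVertex v}.Finite) (hnc : Λ.NoCycles)
    (B : Type*) [NonUnitalCStarAlgebra B] (f : CKFamily Λ B)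
    (hnz : ∀ v, Λ.IsSource v → f.t v ≠ 0) :
    (∀ v, Λ.IsSource v → {lam : Λ.Path | Λ.s lam = v}.Finite) ∧
    ∀ inst : (v : {v : Λ.Path // Λ.IsSource v}) → Fintype {lam : Λ.Path // Λ.s lam = v.1},
      ∃ Φ : ((v : {v : Λ.Path // Λ.IsSource v}) →
          Matrix {lam : Λ.Path // Λ.s lam = v.1} {lam : Λ.Path // Λ.s lam = v.1} ℂ)
          →⋆ₙₐ[ℂ] B,
        Function.Injective Φ ∧
        Set.range Φ =
          ((NonUnitalStarAlgebra.adjoin ℂ (Set.range f.t)).topologicalClosure : Set B) ∧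
        ∀ (v : {v : Λ.Path // Λ.IsSource v}) (α β : {lam : Λ.Path // Λ.s lam = v.1}),
          Φ (Pi.single v (Matrix.single α β 1)) = f.t α.1 * star (f.t β.1) := by
  have : Finite Λ.Path := KGraph.finite_path_of_noCycles hnc hRF hfin
  refine ⟨fun v _ => Set.toFinite _, fun _ => ?_⟩
  have : Fintype {v : Λ.Path // Λ.IsSource v} := Fintype.ofFinite _
  let Φ := f.isMatrixUnits.toNonUnitalStarAlgHom ℂ
  have hclosed : IsClosed (Set.range Φ) := by
    rw [IsMatrixUnits.coe_toNonUnitalStarAlgHom, ← LinearMap.coe_range]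
    exact Submodule.closed_of_finiteDimensional _
  refine ⟨Φ, f.isMatrixUnits.toNonUnitalStarAlgHom_injective fun v α =>
    f.matrixUnit_self_ne_zero (by rw [α.2]; exact v.2) (by rw [α.2]; exact hnz v v.2), ?_,
    fun v α β => ?_⟩
  · rw [← f.range_toNonUnitalStarAlgHom]
    exact hclosed.closure_eq.symm
  · rw [IsMatrixUnits.toNonUnitalStarAlgHom_single, one_smul]
    rfl

/-- Theorem 5.2(2). If `Λ` is a row-finite finitely aligned `k`-graph with
finitely many vertices and no cycles, then each `Λv` (`v` a source) is finite and the
C*-subalgebra generated by a Cuntz–Krieger family with nonzero source projections is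
*-isomorphic to `⊕_{v} M_{Λv}(ℂ)` via `θ_{α,β} ↦ t_α t_β*`. -/
theorem stmt2 {k : ℕ} (Λ : KGraph k) [DecidableEq Λ.Path]
    (hFA : Λ.FinitelyAligned) (hRF : Λ.RowFinite)
    (hfin : {v : Λ.Path | Λ.IsVertex v}.Finite) (hnc : Λ.NoCycles)
    (B : Type*) [NonUnitalCStarAlgebra B] (f : CKFamily Λ B)
    (hnz : ∀ v, Λ.IsSource v → f.t v ≠ 0) :
    (∀ v, Λ.IsSource v → {lam : Λ.Path | Λ.s lam = v}.Finite) ∧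
    ∀ inst : (v : {v : Λ.Path // Λ.IsSource v}) → Fintype {lam : Λ.Path // Λ.s lam = v.1},
      ∃ Φ : ((v : {v : Λ.Path // Λ.IsSource v}) →
          Matrix {lam : Λ.Path // Λ.s lam = v.1} {lam : Λ.Path // Λ.s lam = v.1} ℂ)
          →⋆ₙₐ[ℂ] B,
        Function.Injective Φ ∧
        Set.range Φ =
          ((NonUnitalStarAlgebra.adjoin ℂ (Set.range f.t)).topologicalClosure : Set B) ∧
        ∀ (v : {v : Λ.Path // Λ.IsSource v}) (α β : {lam : Λ.Path // Λ.s lam = v.1}),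
          Φ (Pi.single v (Matrix.single α β 1)) = f.t α.1 * star (f.t β.1) :=
  stmt2_general Λ hRF hfin hnc B f hnz
end

section
/- Let Λ be a 1-graph (i.e. a k-graph with k = 1). Suppose that (μ, ν) is a generalised cycle in Λ. Then there is a conventional cycle λ ∈ Λ ∖ Λ⁰, i.e. a path λ of nonzero degree with r(λ) = s(λ), such that either μ = νλ or ν = μλ. -/
/-!
Applying the generalised-cycle condition to the trivial extension `τ = s(μ)` gives a minimal
common extension `λ` of `μ` and `ν`. In a `1`-graph degrees are totally ordered, say
`d(μ) ≤ d(ν)`; then `d(λ) = d(ν)` forces `λ = ν`, so `ν = μα`. The path `α` runs from `s(μ)` to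
`s(ν) = s(μ)`, and it has nonzero degree since otherwise `ν = μ`.
-/

open scoped ComplexOrder ENat

namespace KGraph

variable {k : ℕ} (Λ : KGraph k) {mu nu α lam : Λ.Path}

theorem comp_eq_self_of_d_eq_zero (h : Λ.s mu = Λ.r α) (hα : Λ.d α = 0) : Λ.comp mu α = mu := by
  rw [← Λ.r_vertex α hα, ← h, Λ.comp_id]

theorem MCE_comm (mu nu : Λ.Path) : Λ.MCE mu nu = Λ.MCE nu mu := by
  ext lam
  simp only [MCE, Set.mem_ofPred_eq, sup_comm (Λ.d mu)]
  exact and_congr_right' and_comm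

theorem exists_comp_eq_of_mem_MCE_of_d_le (hlam : lam ∈ Λ.MCE mu nu)
    (hle : Λ.d mu ≤ Λ.d nu) : ∃ α, Λ.s mu = Λ.r α ∧ Λ.comp mu α = nu := by
  obtain ⟨hd, ⟨α, hα, rfl⟩, β, hβ, hνβ⟩ := hlam
  refine ⟨α, hα, ?_⟩
  rw [← hνβ, Λ.d_comp _ _ hβ, sup_eq_right.2 hle] at hd
  rw [← hνβ, Λ.comp_eq_self_of_d_eq_zero hβ (add_eq_left.1 hd)]

theorem isCycle_of_ne_comp (hα : Λ.s mu = Λ.r α) (hne : mu ≠ Λ.comp mu α)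
    (hs : Λ.s mu = Λ.s (Λ.comp mu α)) : Λ.IsCycle α := by
  refine ⟨fun h0 => hne (Λ.comp_eq_self_of_d_eq_zero hα h0).symm, ?_⟩
  rw [← hα, hs, Λ.s_comp _ _ hα]

end KGraph

theorem Pi.le_total_of_fin_one {α : Type*} [LinearOrder α] (x y : Fin 1 → α) : x ≤ y ∨ y ≤ x := by
  rcases le_total (x 0) (y 0) with h | h
  exacts [Or.inl fun i => Subsingleton.elim i 0 ▸ h, Or.inr fun i => Subsingleton.elim i 0 ▸ h]

/-- Lemma 3.3. In a `1`-graph, every generalised cycle `(μ, ν)` comes from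
a conventional cycle: `μ = νλ` or `ν = μλ` for some cycle `λ`. -/
theorem stmt9 (Λ : KGraph 1) (mu nu : Λ.Path) (hgc : Λ.IsGenCycle mu nu) :
    ∃ lam : Λ.Path, Λ.IsCycle lam ∧ Λ.r lam = Λ.s nu ∧
      (mu = Λ.comp nu lam ∨ nu = Λ.comp mu lam) := by
  obtain ⟨hne, hs, -, hext⟩ := hgc
  obtain ⟨lam, hlam⟩ : (Λ.MCE mu nu).Nonempty := by
    simpa only [Λ.comp_id] using hext (Λ.s mu) (Λ.r_vertex _ (Λ.d_s mu))
  rcases Pi.le_total_of_fin_one (Λ.d mu) (Λ.d nu) with hle | hle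
  · obtain ⟨α, hα, rfl⟩ := Λ.exists_comp_eq_of_mem_MCE_of_d_le hlam hle
    exact ⟨α, Λ.isCycle_of_ne_comp hα hne hs, hα.symm.trans hs, Or.inr rfl⟩
  · rw [Λ.MCE_comm] at hlam
    obtain ⟨β, hβ, rfl⟩ := Λ.exists_comp_eq_of_mem_MCE_of_d_le hlam hle
    exact ⟨β, Λ.isCycle_of_ne_comp hβ hne.symm hs.symm, hβ.symm, Or.inl rfl⟩
end
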